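/- arXiv:2208.09544 — 5 statements merged into one kernel-verified Lean document; each statement's English description precedes it below -/
import Mathlib

section
/- Let (y_n) be a nondecreasing sequence of positive integers, and let A(n,k) be the number of valid n-tuples with first entry k, where (x_1,...,x_n) is valid if x_1 ≤ y_n and x_{j+1} ≤ min(x_j, y_{n-j}) for 1 ≤ j ≤ n-1. Then for any n ≥ 1 and k with k+1 ≤ y_{n+1}, we have A(n+1, k+1) = A(n+1, k) + A(n, k+1). -/
/-! Removing the first entry `c` of a valid `(n+1)`-tuple leaves a valid `n`-tuple whose first
entry is at most `c`, and when `c ≤ y (n+1)` every such `n`-tuple extends back by `c`. So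
`A(n+1, c)` counts valid `n`-tuples with first entry `≤ c`, and the recurrence is the split of
"first entry `≤ k+1`" into "first entry `≤ k`" and "first entry `= k+1`". -/

/-- `x : Fin n → ℕ` (0-indexed version of `(x_1,…,x_n)`) is a valid n-tuple for the
input sequence `y`: `x_1 ≤ y n` and `x_{j+1} ≤ min (x_j) (y (n - j))` for `1 ≤ j ≤ n-1`. -/
def IsValid (y : ℕ → ℕ) (n : ℕ) (x : Fin n → ℕ) : Prop :=
  (∀ h : 0 < n, x ⟨0, h⟩ ≤ y n) ∧
  ∀ i : ℕ, ∀ h : i + 1 < n,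
    x ⟨i + 1, h⟩ ≤ min (x ⟨i, Nat.lt_of_succ_lt h⟩) (y (n - (i + 1)))

/-- `A y n k` : number of valid n-tuples whose first entry equals `k`. -/
noncomputable def A (y : ℕ → ℕ) (n k : ℕ) : ℕ :=
  Nat.card {x : Fin n → ℕ // IsValid y n x ∧ ∀ h : 0 < n, x ⟨0, h⟩ = k}

/-- `W y n` : total number of valid n-tuples. -/
noncomputable def W (y : ℕ → ℕ) (n : ℕ) : ℕ :=
  Nat.card {x : Fin n → ℕ // IsValid y n x}

-- `IsValid` indexes by anonymous constructors, which `Fin.cons_succ` does not match.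
namespace Fin

@[simp] lemma cons_mk_succ {n i : ℕ} {α : Type*} (a : α) (t : Fin n → α) (h : i + 1 < n + 1) :
    (cons a t : Fin (n + 1) → α) ⟨i + 1, h⟩ = t ⟨i, Nat.lt_of_succ_lt_succ h⟩ := rfl

end Fin

lemma IsValid.le {y : ℕ → ℕ} {n : ℕ} {x : Fin n → ℕ} (hx : IsValid y n x) (i : Fin n) :
    x i ≤ y n := by
  obtain ⟨i, hi⟩ := i
  induction i with
  | zero => exact hx.1 hi
  | succ i ih => exact (hx.2 i hi).trans <| (min_le_left _ _).trans (ih (Nat.lt_of_succ_lt hi))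

lemma isValid_finite (y : ℕ → ℕ) (n : ℕ) : {x : Fin n → ℕ | IsValid y n x}.Finite :=
  (Set.finite_Iic fun _ => y n).subset fun _ hx => hx.le

lemma isValid_cons_iff {y : ℕ → ℕ} {n c : ℕ} {t : Fin n → ℕ} :
    IsValid y (n + 1) (Fin.cons c t) ↔
      c ≤ y (n + 1) ∧ IsValid y n t ∧ ∀ h : 0 < n, t ⟨0, h⟩ ≤ c := by
  constructor
  · rintro ⟨hhead, hstep⟩
    refine ⟨hhead n.succ_pos, ⟨fun h => ?_, fun i h => ?_⟩, fun h => ?_⟩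
    · simpa using (hstep 0 (Nat.succ_lt_succ h)).trans (min_le_right _ _)
    · simpa using hstep (i + 1) (Nat.succ_lt_succ h)
    · simpa using (hstep 0 (Nat.succ_lt_succ h)).trans (min_le_left _ _)
  · rintro ⟨hc, ⟨hthead, htstep⟩, hle⟩
    refine ⟨fun _ => hc, fun i h => ?_⟩
    cases i with
    | zero => simpa using ⟨hle (Nat.lt_of_succ_lt_succ h), hthead (Nat.lt_of_succ_lt_succ h)⟩
    | succ i => simpa using htstep i (Nat.lt_of_succ_lt_succ h)

lemma A_succ_eq_card_head_le {y : ℕ → ℕ} {n c : ℕ} (hc : c ≤ y (n + 1)) :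
    A y (n + 1) c = Nat.card {t : Fin n → ℕ // IsValid y n t ∧ ∀ h : 0 < n, t ⟨0, h⟩ ≤ c} := by
  have hcons (x : Fin (n + 1) → ℕ) (hx : ∀ h : 0 < n + 1, x ⟨0, h⟩ = c) :
      Fin.cons c (Fin.tail x) = x := by
    rw [← hx n.succ_pos]; exact Fin.cons_self_tail x
  refine Nat.card_congr
    { toFun := fun x => ⟨Fin.tail x.1, ?_⟩
      invFun := fun t => ⟨Fin.cons c t.1, isValid_cons_iff.2 ⟨hc, t.2⟩, fun _ => rfl⟩
      left_inv := fun x => Subtype.ext (hcons x.1 x.2.2)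
      right_inv := fun t => Subtype.ext (Fin.tail_cons (α := fun _ => ℕ) c t.1) }
  exact (isValid_cons_iff.1 ((hcons x.1 x.2.2).symm ▸ x.2.1)).2

lemma card_and_le_succ {α : Type*} {p : α → Prop} (hp : {x | p x}.Finite) (f : α → ℕ) (k : ℕ) :
    Nat.card {x // p x ∧ f x ≤ k + 1} =
      Nat.card {x // p x ∧ f x ≤ k} + Nat.card {x // p x ∧ f x = k + 1} := by
  have hfin (q : α → Prop) : {x | p x ∧ q x}.Finite := hp.subset fun _ hx => hx.1
  have hunion : {x | p x ∧ f x ≤ k + 1} = {x | p x ∧ f x ≤ k} ∪ {x | p x ∧ f x = k + 1} := by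
    ext; grind
  have hdisj : Disjoint {x | p x ∧ f x ≤ k} {x | p x ∧ f x = k + 1} :=
    Set.disjoint_left.2 fun x h1 h2 => by grind
  have h := Set.ncard_union_eq hdisj (hfin _) (hfin _)
  simp only [← hunion, ← Nat.card_coe_set_eq] at h
  exact h

theorem stmt1_general (y : ℕ → ℕ) (n k : ℕ) (hn : 1 ≤ n) (hk : k + 1 ≤ y (n + 1)) :
    A y (n + 1) (k + 1) = A y (n + 1) k + A y n (k + 1) := by
  have hn : 0 < n := hn
  rw [A_succ_eq_card_head_le hk, A_succ_eq_card_head_le (k.le_succ.trans hk), A]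
  simp only [forall_prop_of_true hn]
  exact card_and_le_succ (isValid_finite y n) (fun t => t ⟨0, hn⟩) k

theorem stmt1 (y : ℕ → ℕ) (hmono : ∀ m, 1 ≤ m → y m ≤ y (m + 1))
    (hpos : ∀ m, 1 ≤ m → 1 ≤ y m) (n k : ℕ) (hn : 1 ≤ n) (hk : k + 1 ≤ y (n + 1)) :
    A y (n + 1) (k + 1) = A y (n + 1) k + A y n (k + 1) :=
  stmt1_general y n k hn hk
end

section
/- Let (y_n) be a nondecreasing sequence of positive integers and A(n,k) its output array. For each fixed n, the row is nondecreasing in k up to the last nonzero entry: if 0 ≤ k < k' and A(n,k') > 0, then A(n,k) ≤ A(n,k'). -/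
lemma valid_bound (y : ℕ → ℕ) (n : ℕ) (x : Fin n → ℕ) (hx : IsValid y n x)
    (h0 : 0 < n) : ∀ i : Fin n, x i ≤ x ⟨0, h0⟩ := by
  rintro ⟨i, hi⟩
  induction i with
  | zero => exact le_refl _
  | succ j ih =>
      calc x ⟨j + 1, hi⟩ ≤ min (x ⟨j, Nat.lt_of_succ_lt hi⟩) (y (n - (j + 1))) :=
            hx.2 j hi
        _ ≤ x ⟨j, Nat.lt_of_succ_lt hi⟩ := min_le_left _ _
        _ ≤ x ⟨0, h0⟩ := ih _

lemma A_finite (y : ℕ → ℕ) (n k : ℕ) (h0 : 0 < n) :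
    Finite {x : Fin n → ℕ // IsValid y n x ∧ ∀ h : 0 < n, x ⟨0, h⟩ = k} := by
  apply Finite.of_injective
    (fun x => (fun i => (⟨x.1 i, by
      have := valid_bound y n x.1 x.2.1 h0 i
      have h0' := x.2.2 h0
      omega⟩ : Fin (k + 1)) : Fin n → Fin (k + 1)))
  intro a b hab
  apply Subtype.ext
  funext i
  have := congrFun hab i
  simpa [Fin.ext_iff] using this

theorem stmt4 (y : ℕ → ℕ) (hmono : ∀ m, 1 ≤ m → y m ≤ y (m + 1))
    (hpos : ∀ m, 1 ≤ m → 1 ≤ y m) (n k k' : ℕ) (hn : 1 ≤ n) (hkk' : k < k')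
    (hpos' : 0 < A y n k') :
    A y n k ≤ A y n k' := by
  have h0 : 0 < n := hn
  have hfin := A_finite y n k' h0
  -- from positivity, there is a witness, so k' ≤ y n
  have hne : Nonempty {x : Fin n → ℕ // IsValid y n x ∧ ∀ h : 0 < n, x ⟨0, h⟩ = k'} := by
    by_contra h
    rw [not_nonempty_iff] at h
    simp [A] at hpos'
  obtain ⟨x', hx'v, hx'0⟩ := hne
  have hk'le : k' ≤ y n := by
    have := hx'v.1 h0
    rw [hx'0 h0] at this
    exact this
  -- the injection: replace the first entry by k'
  have : ∀ x : {x : Fin n → ℕ // IsValid y n x ∧ ∀ h : 0 < n, x ⟨0, h⟩ = k},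
      IsValid y n (Function.update x.1 ⟨0, h0⟩ k') ∧
      ∀ h : 0 < n, Function.update x.1 ⟨0, h0⟩ k' ⟨0, h⟩ = k' := by
    rintro ⟨x, hxv, hx0⟩
    refine ⟨⟨fun h => ?_, fun i hi => ?_⟩, fun h => ?_⟩
    · simp [Function.update]; exact hk'le
    · have hne1 : (⟨i + 1, hi⟩ : Fin n) ≠ ⟨0, h0⟩ := by simp [Fin.ext_iff]
      rw [Function.update_of_ne hne1]
      rcases Nat.eq_zero_or_pos i with rfl | hipos
      · rw [Function.update_self]
        have := hxv.2 0 hi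
        rw [hx0 h0] at this
        exact le_trans this (min_le_min (le_of_lt hkk') (le_refl _))
      · have hne2 : (⟨i, Nat.lt_of_succ_lt hi⟩ : Fin n) ≠ ⟨0, h0⟩ := by
          simp [Fin.ext_iff]; omega
        rw [Function.update_of_ne hne2]
        exact hxv.2 i hi
    · exact Function.update_self _ _ _
  let f : {x : Fin n → ℕ // IsValid y n x ∧ ∀ h : 0 < n, x ⟨0, h⟩ = k} →
      {x : Fin n → ℕ // IsValid y n x ∧ ∀ h : 0 < n, x ⟨0, h⟩ = k'} :=
    fun x => ⟨Function.update x.1 ⟨0, h0⟩ k', this x⟩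
  have hinj : Function.Injective f := by
    rintro ⟨a, hav, ha0⟩ ⟨b, hbv, hb0⟩ hab
    apply Subtype.ext
    funext i
    have := congrFun (congrArg Subtype.val hab) i
    by_cases hi : i = ⟨0, h0⟩
    · subst hi; show a _ = b _; rw [ha0 h0, hb0 h0]
    · simpa [f, Function.update_of_ne hi] using this
  exact Nat.card_le_card_of_injective f hinj
end

section
/- Let (y_n) be a nondecreasing sequence of positive integers and A(n,k) its output array. For all n ≥ 1 and all k ≥ 0, A(n,k) ≤ C(n-1+k, k). -/
/-!
A valid tuple is nonincreasing, so one with first entry `k` is determined by its tail, a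
nonincreasing sequence of `n - 1` values in `{0, …, k}`; the bounds from `y` only remove tuples.
A nonincreasing sequence is the sorted list of its multiset of values, and by stars and bars there
are `C(n - 1 + k, k)` multisets of size `n - 1` drawn from `k + 1` values.
-/

theorem IsValid.antitone {y : ℕ → ℕ} {n : ℕ} {x : Fin n → ℕ} (hx : IsValid y n x) :
    Antitone x := by
  cases n with
  | zero => exact fun i => i.elim0
  | succ n =>
    exact Fin.antitone_iff_succ_le.mpr fun i => (hx.2 i i.succ.isLt).trans (min_le_left _ _)

theorem multiset_ofFn_injective_on_antitone {α : Type*} [LinearOrder α] {m : ℕ} :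
    Function.Injective fun f : {f : Fin m → α // Antitone f} => (List.ofFn f.1 : Multiset α) :=
  fun f g hfg => Subtype.ext <| List.ofFn_injective <|
    (Multiset.coe_eq_coe.mp hfg).eq_of_sortedGE f.2.sortedGE_ofFn g.2.sortedGE_ofFn

theorem card_antitone_le_choose (α : Type*) [Fintype α] [LinearOrder α] (m : ℕ) :
    Nat.card {f : Fin m → α // Antitone f} ≤ (Fintype.card α + m - 1).choose m := by
  classical
  rw [← Sym.card_sym_eq_choose, ← Nat.card_eq_fintype_card]
  exact Nat.card_le_card_of_injective
    (fun f => ⟨(List.ofFn f.1 : Multiset α), by simp⟩)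
    fun f g hfg => multiset_ofFn_injective_on_antitone (congrArg Subtype.val hfg)

theorem A_succ_le_card_antitone (y : ℕ → ℕ) (m k : ℕ) :
    A y (m + 1) k ≤ Nat.card {f : Fin m → Fin (k + 1) // Antitone f} := by
  have tail_le (x : {x : Fin (m + 1) → ℕ // IsValid y (m + 1) x ∧ ∀ h, x ⟨0, h⟩ = k})
      (i : Fin m) : x.1 i.succ ≤ k :=
    (x.2.1.antitone (Fin.zero_le i.succ)).trans_eq (x.2.2 m.succ_pos)
  refine Nat.card_le_card_of_injective
    (fun x => ⟨fun i => ⟨x.1 i.succ, Nat.lt_succ_of_le (tail_le x i)⟩,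
      fun i j hij => x.2.1.antitone (Fin.succ_le_succ_iff.mpr hij)⟩) fun x x' hxx' => ?_
  have tail_eq (i : Fin m) : x.1 i.succ = x'.1 i.succ :=
    congrArg Fin.val (congrFun (congrArg Subtype.val hxx') i)
  have head_eq : x.1 0 = x'.1 0 := (x.2.2 m.succ_pos).trans (x'.2.2 m.succ_pos).symm
  exact Subtype.ext <| funext <| Fin.cases head_eq tail_eq

theorem stmt7_general (y : ℕ → ℕ) (n k : ℕ) :
    A y n k ≤ (n - 1 + k).choose k := by
  cases n with
  | zero =>
    simpa [A] using Finite.card_le_one_iff_subsingleton.mpr inferInstance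
  | succ m =>
    calc A y (m + 1) k ≤ Nat.card {f : Fin m → Fin (k + 1) // Antitone f} :=
          A_succ_le_card_antitone y m k
      _ ≤ (k + 1 + m - 1).choose m := by simpa using card_antitone_le_choose (Fin (k + 1)) m
      _ = (m + 1 - 1 + k).choose k := by
          rw [show k + 1 + m - 1 = m + k by omega, Nat.choose_symm_add, Nat.add_sub_cancel]

theorem stmt7 (y : ℕ → ℕ) (hmono : ∀ m, 1 ≤ m → y m ≤ y (m + 1))
    (hpos : ∀ m, 1 ≤ m → 1 ≤ y m) (n k : ℕ) (hn : 1 ≤ n) :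
    A y n k ≤ (n - 1 + k).choose k :=
  stmt7_general y n k
end

section
/- Let (y_n) be a nondecreasing sequence of positive integers (with the convention y_0 = 0), and W(n) the number of valid n-tuples. Then Π_{k=0}^{n-1} (1 + y_{k+1} - y_k) ≤ W(n) ≤ Π_{k=1}^{n} (1 + y_k). -/
lemma isValid_le (y : ℕ → ℕ) (n : ℕ) (x : Fin n → ℕ) (hv : IsValid y n x)
    (i : Fin n) : x i ≤ y (n - i.val) := by
  obtain ⟨iv, hi⟩ := i
  cases iv with
  | zero => simpa using hv.1 (by omega)
  | succ j => exact (hv.2 j hi).trans (min_le_right _ _)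

lemma sum_le_y (y : ℕ → ℕ) (hm : ∀ k, y k ≤ y (k + 1)) (hy0 : y 0 = 0)
    (b : ℕ → ℕ) (hb : ∀ k, b k ≤ y (k + 1) - y k) :
    ∀ m, (∑ k ∈ Finset.range m, b k) ≤ y m := by
  intro m
  induction m with
  | zero => simp [hy0]
  | succ m ih =>
    rw [Finset.sum_range_succ]
    have h1 := hb m
    have h2 := hm m
    omega

theorem stmt9 (y : ℕ → ℕ) (hmono : ∀ m, 1 ≤ m → y m ≤ y (m + 1))
    (hpos : ∀ m, 1 ≤ m → 1 ≤ y m) (hy0 : y 0 = 0) (n : ℕ) (hn : 1 ≤ n) :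
    (∏ k ∈ Finset.range n, (1 + y (k + 1) - y k)) ≤ W y n ∧
      W y n ≤ ∏ k ∈ Finset.Icc 1 n, (1 + y k) := by
  classical
  have hm : ∀ k, y k ≤ y (k + 1) := by
    intro k
    rcases Nat.eq_zero_or_pos k with rfl | hk
    · rw [hy0]; exact Nat.zero_le _
    · exact hmono k hk
  -- upper bound
  let f : {x : Fin n → ℕ // IsValid y n x} → (∀ i : Fin n, Fin (y (n - i.val) + 1)) :=
    fun x i => ⟨x.1 i, Nat.lt_succ_of_le (isValid_le y n x.1 x.2 i)⟩
  have hf : Function.Injective f := by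
    intro x x' h
    apply Subtype.ext
    funext i
    have := congrFun h i
    simpa [f, Fin.ext_iff] using this
  haveI hfin : Finite {x : Fin n → ℕ // IsValid y n x} := Finite.of_injective f hf
  constructor
  · -- lower bound
    let ba : (∀ i : Fin n, Fin (1 + y (i.val + 1) - y i.val)) → ℕ → ℕ :=
      fun a k => if h : k < n then (a ⟨k, h⟩ : ℕ) else 0
    have hba : ∀ a k, ba a k ≤ y (k + 1) - y k := by
      intro a k
      by_cases h : k < n
      · have h1 : (a ⟨k, h⟩ : ℕ) < 1 + y (k + 1) - y k := (a ⟨k, h⟩).isLt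
        have h2 := hm k
        simp only [ba, dif_pos h]
        omega
      · simp [ba, dif_neg h]
    let g : (∀ i : Fin n, Fin (1 + y (i.val + 1) - y i.val)) → {x : Fin n → ℕ // IsValid y n x} :=
      fun a => ⟨fun j => ∑ k ∈ Finset.range (n - j.val), ba a k, by
        constructor
        · intro h
          simpa using sum_le_y y hm hy0 (ba a) (hba a) n
        · intro i h
          refine le_min ?_ ?_
          · refine Finset.sum_le_sum_of_subset (Finset.range_subset_range.2 ?_)
            simp only [Fin.val_mk]
            omega
          · exact sum_le_y y hm hy0 (ba a) (hba a) _⟩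
    have hg : Function.Injective g := by
      intro a a' h
      have hval : ∀ j : Fin n,
          (∑ k ∈ Finset.range (n - j.val), ba a k) = ∑ k ∈ Finset.range (n - j.val), ba a' k :=
        fun j => congrFun (congrArg Subtype.val h) j
      have hS : ∀ m ≤ n, (∑ k ∈ Finset.range m, ba a k) = ∑ k ∈ Finset.range m, ba a' k := by
        intro m hmn
        rcases Nat.eq_zero_or_pos m with rfl | hmpos
        · simp
        · have := hval ⟨n - m, by omega⟩
          simpa [Nat.sub_sub_self hmn] using this
      have hbk : ∀ k < n, ba a k = ba a' k := by
        intro k hk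
        have h1 := hS k (by omega)
        have h2 := hS (k + 1) (by omega)
        rw [Finset.sum_range_succ, Finset.sum_range_succ] at h2
        omega
      funext i
      apply Fin.ext
      have := hbk i.val i.isLt
      simpa [ba] using this
    have hcard : Nat.card (∀ i : Fin n, Fin (1 + y (i.val + 1) - y i.val))
        = ∏ k ∈ Finset.range n, (1 + y (k + 1) - y k) := by
      rw [Nat.card_pi]
      simp [Fin.prod_univ_eq_prod_range (fun k => 1 + y (k + 1) - y k)]
    calc (∏ k ∈ Finset.range n, (1 + y (k + 1) - y k))
        = Nat.card (∀ i : Fin n, Fin (1 + y (i.val + 1) - y i.val)) := hcard.symm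
      _ ≤ W y n := Nat.card_le_card_of_injective g hg
  · -- upper bound
    have h1 : W y n ≤ Nat.card (∀ i : Fin n, Fin (y (n - i.val) + 1)) :=
      Nat.card_le_card_of_injective f hf
    have hcard : Nat.card (∀ i : Fin n, Fin (y (n - i.val) + 1))
        = ∏ k ∈ Finset.Icc 1 n, (1 + y k) := by
      rw [Nat.card_pi]
      simp only [Nat.card_eq_fintype_card, Fintype.card_fin]
      rw [Fin.prod_univ_eq_prod_range (fun k => y (n - k) + 1)]
      rw [show Finset.Icc 1 n = Finset.Ico 1 (n + 1) by rfl,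
        Finset.prod_Ico_eq_prod_range]
      simp only [Nat.add_sub_cancel]
      have : ∀ j ∈ Finset.range n, y (n - j) + 1 = (fun k => 1 + y (1 + k)) (n - 1 - j) := by
        intro j hj
        simp only [Finset.mem_range] at hj
        show y (n - j) + 1 = 1 + y (1 + (n - 1 - j))
        rw [show 1 + (n - 1 - j) = n - j by omega]
        omega
      rw [Finset.prod_congr rfl this]
      exact Finset.prod_range_reflect (fun k => 1 + y (1 + k)) n
    omega
end

section
/- Let W(n) = C_{n+1} (Catalan numbers) and define M(n) = (2·W(n-1) − 3·W(n-2))/W(n) for n ≥ 2. Then M(n) = (n+2)(5n−7)/(4(2n+1)(2n−1)), and M(n) → 5/16 as n → ∞. -/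
open Filter Topology

theorem succ_succ_mul_catalan_succ (n : ℕ) :
    (n + 2) * catalan (n + 1) = 2 * (2 * n + 1) * catalan n := by
  refine Nat.eq_of_mul_eq_mul_left n.succ_pos ?_
  calc (n + 1) * ((n + 2) * catalan (n + 1)) = (n + 1) * Nat.centralBinom (n + 1) := by
        rw [← succ_mul_catalan_eq_centralBinom]
    _ = 2 * (2 * n + 1) * ((n + 1) * catalan n) := by
        rw [Nat.succ_mul_centralBinom_succ, succ_mul_catalan_eq_centralBinom]
    _ = (n + 1) * (2 * (2 * n + 1) * catalan n) := by ring

theorem catalan_pos (n : ℕ) : 0 < catalan n :=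
  Nat.pos_of_ne_zero fun h => (Nat.centralBinom_pos n).ne' <| by
    rw [← succ_mul_catalan_eq_centralBinom, h, mul_zero]

theorem cast_catalan_succ (n : ℕ) :
    (catalan (n + 1) : ℝ) = 2 * (2 * n + 1) / (n + 2) * catalan n := by
  rw [div_mul_eq_mul_div, eq_div_iff (by positivity), mul_comm]
  exact_mod_cast succ_succ_mul_catalan_succ n

theorem two_mul_catalan_sub_three_mul_div_catalan (n : ℕ) (hn : 1 ≤ n) :
    (2 * (catalan n : ℝ) - 3 * catalan (n - 1)) / catalan (n + 1) =
      ((n : ℝ) + 2) * (5 * n - 7) / (4 * (2 * n + 1) * (2 * n - 1)) := by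
  obtain ⟨m, rfl⟩ : ∃ m, n = m + 1 := ⟨n - 1, by omega⟩
  have hc : (0 : ℝ) < catalan m := by exact_mod_cast catalan_pos m
  rw [Nat.add_sub_cancel, cast_catalan_succ (m + 1), cast_catalan_succ m]
  have hd : (0 : ℝ) < 2 * ((m : ℝ) + 1) - 1 := by linarith [(m.cast_nonneg : (0 : ℝ) ≤ m)]
  push_cast
  field_simp
  ring

theorem tendsto_two_mul_catalan_sub_three_mul_div_catalan :
    Tendsto (fun n : ℕ => (2 * (catalan n : ℝ) - 3 * catalan (n - 1)) / catalan (n + 1))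
      atTop (𝓝 (5 / 16)) := by
  let f : ℝ → ℝ := fun x => (1 + 2 * x) * (5 - 7 * x) / (4 * (2 + x) * (2 - x))
  have hf : ContinuousAt f 0 := ContinuousAt.div (by fun_prop) (by fun_prop) (by norm_num)
  have hlim : Tendsto (fun n : ℕ => f (1 / n)) atTop (𝓝 (f 0)) :=
    hf.tendsto.comp tendsto_one_div_atTop_nhds_zero_nat
  rw [show f 0 = 5 / 16 by norm_num [f]] at hlim
  refine hlim.congr' ?_
  filter_upwards [eventually_ge_atTop 1] with n hn
  have hn' : (1 : ℝ) ≤ n := by exact_mod_cast hn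
  have h₁ : (2 * n - 1 : ℝ) ≠ 0 := by linarith
  rw [two_mul_catalan_sub_three_mul_div_catalan n hn]
  simp only [f]
  field_simp

theorem stmt18 :
    (∀ n : ℕ, 2 ≤ n →
      (2 * (catalan n : ℝ) - 3 * (catalan (n - 1) : ℝ)) / (catalan (n + 1) : ℝ) =
        ((n : ℝ) + 2) * (5 * n - 7) / (4 * (2 * n + 1) * (2 * n - 1))) ∧
    Filter.Tendsto
      (fun n : ℕ => (2 * (catalan n : ℝ) - 3 * (catalan (n - 1) : ℝ)) / (catalan (n + 1) : ℝ))
      Filter.atTop (nhds (5 / 16)) :=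
  ⟨fun n hn => two_mul_catalan_sub_three_mul_div_catalan n (by omega),
    tendsto_two_mul_catalan_sub_three_mul_div_catalan⟩
end
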